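/- arXiv:cs/0002005 — 3 statements merged into one kernel-verified Lean document; each statement's English description precedes it below -/
import Mathlib

section
/- Let G be a connected graph with distinct edge weights and minimum spanning tree M. If the weight of a single tree edge e ∈ M is increased, then the minimum spanning tree of the new graph is either M itself, or M with e replaced by the minimum-weight non-tree edge f crossing the cut determined by M − e; the latter occurs exactly when the new weight of e exceeds the weight of f. -/
open SimpleGraph

/-- `T` is a spanning tree of `G`: a subgraph of `G` (on the same vertex set)
that is a tree (connected and acyclic). -/
def IsSpanningTree {V : Type*} (G T : SimpleGraph V) : Prop :=
  T ≤ G ∧ T.IsTree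

/-- Total weight of (the edges of) a graph. -/
noncomputable def treeWeight {V : Type*} (w : Sym2 V → ℝ) (T : SimpleGraph V) : ℝ :=
  ∑ᶠ e ∈ T.edgeSet, w e

/-- `M` is a minimum spanning tree of `G` with respect to `w`. -/
def IsMST {V : Type*} (G : SimpleGraph V) (w : Sym2 V → ℝ) (M : SimpleGraph V) : Prop :=
  IsSpanningTree G M ∧ ∀ T : SimpleGraph V, IsSpanningTree G T → treeWeight w M ≤ treeWeight w T

/-- The edge `e` crosses the cut `(S, Sᶜ)`: exactly one endpoint lies in `S`. -/
def Crosses {V : Type*} (S : Set V) (e : Sym2 V) : Prop :=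
  ∃ u v : V, e = s(u, v) ∧ u ∈ S ∧ v ∉ S

section Helpers

variable {V : Type*}

lemma tw_finset [Fintype V] [DecidableEq V] (w : Sym2 V → ℝ) (T : SimpleGraph V) :
    treeWeight w T = ∑ e ∈ (Set.toFinite T.edgeSet).toFinset, w e := by
  rw [treeWeight, ← finsum_mem_coe_finset, Set.Finite.coe_toFinset]

lemma tw_congr (w1 w2 : Sym2 V → ℝ) (T : SimpleGraph V)
    (h : ∀ a ∈ T.edgeSet, w1 a = w2 a) : treeWeight w1 T = treeWeight w2 T :=
  finsum_mem_congr rfl h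

lemma tw_update_mem [Fintype V] [DecidableEq V] (w : Sym2 V → ℝ) (c : ℝ) (e : Sym2 V)
    (T : SimpleGraph V) (he : e ∈ T.edgeSet) :
    treeWeight (Function.update w e c) T = treeWeight w T - w e + c := by
  classical
  rw [tw_finset, tw_finset]
  set s := (Set.toFinite T.edgeSet).toFinset with hs
  have hes : e ∈ s := by simpa [hs, Set.Finite.mem_toFinset] using he
  have h1 : ∑ a ∈ s.erase e, Function.update w e c a + Function.update w e c e
      = ∑ a ∈ s, Function.update w e c a := Finset.sum_erase_add s _ hes
  have h2 : ∑ a ∈ s.erase e, w a + w e = ∑ a ∈ s, w a := Finset.sum_erase_add s _ hes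
  have h3 : ∑ a ∈ s.erase e, Function.update w e c a = ∑ a ∈ s.erase e, w a := by
    refine Finset.sum_congr rfl fun a ha => ?_
    exact Function.update_of_ne (Finset.ne_of_mem_erase ha) _ _
  rw [Function.update_self] at h1
  rw [h3] at h1
  linarith

lemma tw_update_not_mem [DecidableEq V] (w : Sym2 V → ℝ) (c : ℝ) (e : Sym2 V) (T : SimpleGraph V)
    (he : e ∉ T.edgeSet) :
    treeWeight (Function.update w e c) T = treeWeight w T := by
  classical
  refine tw_congr _ _ _ fun a ha => ?_
  have hne : a ≠ e := fun h => he (h ▸ ha)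
  exact Function.update_of_ne hne _ _

lemma edgeSet_swap {T : SimpleGraph V} {g e : Sym2 V} (he : ¬ e.IsDiag) :
    ((T.deleteEdges {g}) ⊔ fromEdgeSet {e}).edgeSet = insert e (T.edgeSet \ {g}) := by
  rw [edgeSet_sup, edgeSet_deleteEdges, edgeSet_fromEdgeSet]
  have h1 : ({e} : Set (Sym2 V)) \ {z | z.IsDiag} = {e} := by
    ext a
    simp only [Set.mem_diff, Set.mem_singleton_iff, Set.mem_setOf_eq, and_iff_left_iff_imp]
    rintro rfl
    exact he
  rw [show Sym2.diagSet = {z : Sym2 V | z.IsDiag} from rfl, h1, Set.union_singleton]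

lemma tw_exchange [Fintype V] [DecidableEq V] (w : Sym2 V → ℝ) (T H : SimpleGraph V)
    (g e' : Sym2 V) (hg : g ∈ T.edgeSet) (he' : e' ∉ T.edgeSet)
    (hE : H.edgeSet = insert e' (T.edgeSet \ {g})) :
    treeWeight w H = treeWeight w T - w g + w e' := by
  classical
  rw [tw_finset, tw_finset]
  set s := (Set.toFinite T.edgeSet).toFinset with hs
  have hsc : (s : Set (Sym2 V)) = T.edgeSet := Set.Finite.coe_toFinset _
  have hHs : (Set.toFinite H.edgeSet).toFinset = insert e' (s.erase g) := by
    apply Finset.coe_injective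
    rw [Finset.coe_insert, Finset.coe_erase, hsc, Set.Finite.coe_toFinset, hE]
  have hgs : g ∈ s := by simpa [hs, Set.Finite.mem_toFinset] using hg
  have he's : e' ∉ s.erase g := fun h =>
    he' (by simpa [hs, Set.Finite.mem_toFinset] using Finset.mem_of_mem_erase h)
  rw [hHs, Finset.sum_insert he's]
  have h2 : ∑ a ∈ s.erase g, w a + w g = ∑ a ∈ s, w a := Finset.sum_erase_add s _ hgs
  linarith

lemma crossing_dart {H : SimpleGraph V} {S : Set V} :
    ∀ {a b : V} (p : H.Walk a b), a ∈ S → b ∉ S →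
      ∃ u v : V, H.Adj u v ∧ u ∈ S ∧ v ∉ S ∧ s(u, v) ∈ p.edges := by
  intro a b p
  induction p with
  | nil => intro ha hb; exact absurd ha hb
  | @cons a c b h q ih =>
    intro ha hb
    by_cases hc : c ∈ S
    · obtain ⟨u, v, h1, h2, h3, h4⟩ := ih hc hb
      exact ⟨u, v, h1, h2, h3, List.mem_cons_of_mem _ h4⟩
    · exact ⟨a, c, h, ha, hc, by simp [Walk.edges_cons]⟩

lemma reach_or' {T : SimpleGraph V} {u v : V} {z t : V} (p : T.Walk z t) :
    (T.deleteEdges {s(u, v)}).Reachable z t ∨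
      ((T.deleteEdges {s(u, v)}).Reachable z u ∧ (T.deleteEdges {s(u, v)}).Reachable v t) ∨
      ((T.deleteEdges {s(u, v)}).Reachable z v ∧ (T.deleteEdges {s(u, v)}).Reachable u t) := by
  induction p with
  | nil => exact Or.inl (Reachable.refl _)
  | @cons a c d h q ih =>
    by_cases he : s(a, c) = s(u, v)
    · rw [Sym2.eq_iff] at he
      rcases he with ⟨rfl, rfl⟩ | ⟨rfl, rfl⟩
      · -- a = u, c = v
        rcases ih with h1 | ⟨h1, h2⟩ | ⟨h1, h2⟩
        · exact Or.inr (Or.inl ⟨Reachable.refl _, h1⟩)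
        · exact Or.inr (Or.inl ⟨Reachable.refl _, h2⟩)
        · exact Or.inl h2
      · -- a = v, c = u
        rcases ih with h1 | ⟨h1, h2⟩ | ⟨h1, h2⟩
        · exact Or.inr (Or.inr ⟨Reachable.refl _, h1⟩)
        · exact Or.inl h2
        · exact Or.inr (Or.inr ⟨Reachable.refl _, h2⟩)
    · have hadj : (T.deleteEdges {s(u, v)}).Adj a c := by
        rw [deleteEdges_adj]
        exact ⟨h, by simpa using he⟩
      rcases ih with h1 | ⟨h1, h2⟩ | ⟨h1, h2⟩
      · exact Or.inl (hadj.reachable.trans h1)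
      · exact Or.inr (Or.inl ⟨hadj.reachable.trans h1, h2⟩)
      · exact Or.inr (Or.inr ⟨hadj.reachable.trans h1, h2⟩)

lemma reach_or {T : SimpleGraph V} {u v : V} {z : V} (p : T.Walk z u) :
    (T.deleteEdges {s(u, v)}).Reachable z u ∨ (T.deleteEdges {s(u, v)}).Reachable z v := by
  rcases reach_or' (v := v) p with h1 | ⟨h1, h2⟩ | ⟨h1, h2⟩
  · exact Or.inl h1
  · exact Or.inl h1
  · exact Or.inr h1

lemma swap_isTree {T : SimpleGraph V} (hT : T.IsTree) {u v a b : V} (huv : T.Adj u v)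
    (ha : (T.deleteEdges {s(u, v)}).Reachable u a)
    (hb : ¬(T.deleteEdges {s(u, v)}).Reachable u b) :
    ((T.deleteEdges {s(u, v)}) ⊔ fromEdgeSet {s(a, b)}).IsTree := by
  set D := T.deleteEdges {s(u, v)} with hD
  set T' := D ⊔ fromEdgeSet {s(a, b)} with hT'
  have hab : a ≠ b := fun h => hb (h ▸ ha)
  have hDle : D ≤ T := deleteEdges_le _
  have hDT' : D ≤ T' := le_sup_left
  have hadj_ab : T'.Adj a b :=
    (le_sup_right : fromEdgeSet {s(a, b)} ≤ T') ((fromEdgeSet_adj _).mpr ⟨rfl, hab⟩)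
  have hbv : D.Reachable b v := by
    obtain ⟨p⟩ := hT.isConnected b u
    rcases reach_or (v := v) p with h1 | h1
    · exact absurd h1.symm hb
    · exact h1
  have key : ∀ z : V, T'.Reachable z a := by
    intro z
    obtain ⟨p⟩ := hT.isConnected z u
    rcases reach_or (v := v) p with h1 | h1
    · exact (h1.mono hDT').trans (ha.mono hDT')
    · exact ((h1.mono hDT').trans ((hbv.symm.mono hDT').trans hadj_ab.symm.reachable))
  have hconn : T'.Connected := by
    have hne : Nonempty V := hT.isConnected.nonempty
    exact Connected.mk fun z z' => (key z).trans (key z').symm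
  have hbridge : ¬(T' \ fromEdgeSet {s(a, b)}).Reachable a b := by
    intro hr
    apply hb
    have hle : T' \ fromEdgeSet {s(a, b)} ≤ D := by
      rw [hT', sup_sdiff_right_self]
      exact sdiff_le
    exact ha.trans (hr.mono hle)
  have hacyc : T'.IsAcyclic := by
    intro z cyc hcyc
    by_cases hm : s(a, b) ∈ cyc.edges
    · have hbr : T'.IsBridge s(a, b) := isBridge_iff.mpr hbridge
      exact (isBridge_iff_adj_and_forall_cycle_notMem hadj_ab).mp hbr cyc hcyc hm
    · have hsub : ∀ e ∈ cyc.edges, e ∈ T.edgeSet := by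
        intro e hee
        have h1 : e ∈ T'.edgeSet := cyc.edges_subset_edgeSet hee
        rw [hT', edgeSet_sup, hD, edgeSet_deleteEdges, edgeSet_fromEdgeSet] at h1
        rcases h1 with h1 | h1
        · exact h1.1
        · exact absurd (h1.1 ▸ hee) hm
      exact hT.IsAcyclic (cyc.transfer T hsub) (hcyc.transfer hsub)
  exact ⟨hconn, hacyc⟩

lemma path_crossing_sep {T : SimpleGraph V} (hT : T.IsTree) {x y : V} {S : Set V}
    (hx : x ∈ S) (hy : y ∉ S) :
    ∃ u v : V, T.Adj u v ∧ u ∈ S ∧ v ∉ S ∧ ¬(T.deleteEdges {s(u, v)}).Reachable x y := by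
  classical
  obtain ⟨p, hp, hup⟩ := hT.existsUnique_path x y
  obtain ⟨u, v, h1, h2, h3, h4⟩ := crossing_dart p hx hy
  refine ⟨u, v, h1, h2, h3, fun hr => ?_⟩
  obtain ⟨q0⟩ := hr
  obtain ⟨q, hqp⟩ := q0.toPath
  have hsub : ∀ e ∈ q.edges, e ∈ T.edgeSet := by
    intro e hee
    have h5 := q.edges_subset_edgeSet hee
    rw [edgeSet_deleteEdges] at h5
    exact h5.1
  have heq : q.transfer T hsub = p := hup _ (hqp.transfer hsub)
  have hmem : s(u, v) ∈ q.edges := by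
    rw [← Walk.edges_transfer q hsub, heq]; exact h4
  have h5 := q.edges_subset_edgeSet hmem
  rw [edgeSet_deleteEdges] at h5
  exact h5.2 rfl

lemma exchange_tree {T : SimpleGraph V} (hT : T.IsTree) {x y : V} {S : Set V}
    (hx : x ∈ S) (hy : y ∉ S) (hxyT : s(x, y) ∉ T.edgeSet) :
    ∃ u v : V, T.Adj u v ∧ u ∈ S ∧ v ∉ S ∧
      ((T.deleteEdges {s(u, v)}) ⊔ fromEdgeSet {s(x, y)}).IsTree := by
  obtain ⟨u, v, h1, h2, h3, hsep⟩ := path_crossing_sep hT hx hy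
  obtain ⟨pxu⟩ := hT.isConnected x u
  refine ⟨u, v, h1, h2, h3, ?_⟩
  rcases reach_or (v := v) pxu with hxu | hxv
  · exact swap_isTree hT h1 hxu.symm (fun h => hsep (hxu.trans h))
  · have hswap : s(u, v) = s(v, u) := Sym2.eq_swap
    rw [hswap]
    exact swap_isTree hT h1.symm (by rw [← hswap]; exact hxv.symm)
      (by rw [← hswap]; intro h; exact hsep (hxv.trans h))

end Helpers

/-- **Tree edge weight increase.** Let `e = s(x,y)` be an edge of the MST `M`, and
increase its weight (keeping weights distinct). Let `S` be the component of
`M - e` containing `x`, and let `f` be the minimum-weight edge of `G` other than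
`e` crossing the cut `(S, Sᶜ)`. If the new weight of `e` is still smaller than
`w f`, the MST is unchanged; if it is larger, the new MST is `(M - e) + f`. -/
theorem tree_increase_update {V : Type*} [Fintype V] [DecidableEq V]
    (G : SimpleGraph V) (hG : G.Connected)
    (w : Sym2 V → ℝ) (hw : Set.InjOn w G.edgeSet)
    (M : SimpleGraph V) (hM : IsMST G w M)
    (x y : V) (he : s(x, y) ∈ M.edgeSet)
    (c : ℝ) (hc : c > w s(x, y))
    (w' : Sym2 V → ℝ) (hw' : w' = Function.update w s(x, y) c)
    (hw'inj : Set.InjOn w' G.edgeSet)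
    (S : Set V) (hS : S = {z : V | (M.deleteEdges {s(x, y)}).Reachable x z})
    (f : Sym2 V) (hfG : f ∈ G.edgeSet) (hfe : f ≠ s(x, y)) (hfcr : Crosses S f)
    (hfmin : ∀ g ∈ G.edgeSet, g ≠ s(x, y) → Crosses S g → w f ≤ w g) :
    (c < w f → IsMST G w' M) ∧
    (c > w f →
      IsMST G w' (M.deleteEdges {s(x, y)} ⊔ SimpleGraph.fromEdgeSet {f})) := by

  classical
  subst hw'
  subst hS
  obtain ⟨⟨hMG, hMtree⟩, hMmin⟩ := hM
  have hadjxy : M.Adj x y := (mem_edgeSet M).mp he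
  have hxy : x ≠ y := hadjxy.ne
  have hxyG : s(x, y) ∈ G.edgeSet := edgeSet_mono hMG he
  have hxS : x ∈ {z : V | (M.deleteEdges {s(x, y)}).Reachable x z} := Reachable.refl x
  have hyS : y ∉ {z : V | (M.deleteEdges {s(x, y)}).Reachable x z} := by
    intro hr
    have hbr := isAcyclic_iff_forall_adj_isBridge.mp hMtree.2 hadjxy
    exact isBridge_iff.mp hbr hr
  obtain ⟨a, b, hfab, haS, hbS⟩ := hfcr
  have hfd : ¬ f.IsDiag := G.not_isDiag_of_mem_edgeSet hfG
  have hfM : f ∉ M.edgeSet := by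
    intro hfMmem
    apply hbS
    have hadj : (M.deleteEdges {s(x, y)}).Adj a b := by
      rw [deleteEdges_adj]
      refine ⟨(mem_edgeSet _).mp (by rw [← hfab]; exact hfMmem), ?_⟩
      intro hmem
      exact hfe (by rw [hfab]; exact hmem)
    exact Reachable.trans haS hadj.reachable
  have key : ∀ T : SimpleGraph V, IsSpanningTree G T → s(x, y) ∉ T.edgeSet →
      treeWeight w M - w s(x, y) + w f ≤ treeWeight w T := by
    intro T hT heT
    obtain ⟨u, v, huv, huS, hvS, htree⟩ := exchange_tree hT.2 hxS hyS heT
    have hguv : s(u, v) ∈ T.edgeSet := (mem_edgeSet T).mpr huv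
    have hT''le : (T.deleteEdges {s(u, v)}) ⊔ fromEdgeSet {s(x, y)} ≤ G := by
      refine sup_le ((deleteEdges_le _).trans hT.1) ?_
      have h := fromEdgeSet_mono (Set.singleton_subset_iff.mpr hxyG)
      rwa [fromEdgeSet_edgeSet] at h
    have hmle := hMmin _ ⟨hT''le, htree⟩
    have hweq : treeWeight w ((T.deleteEdges {s(u, v)}) ⊔ fromEdgeSet {s(x, y)})
        = treeWeight w T - w s(u, v) + w s(x, y) := by
      refine tw_exchange w T _ _ _ hguv heT (edgeSet_swap ?_)
      simp [hxy]
    have hfg : w f ≤ w s(u, v) := by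
      refine hfmin _ (edgeSet_mono hT.1 hguv) ?_ ⟨u, v, rfl, huS, hvS⟩
      intro hguveq
      exact heT (hguveq ▸ hguv)
    linarith
  constructor
  · intro hcf
    refine ⟨⟨hMG, hMtree⟩, ?_⟩
    intro T hT
    have hMup : treeWeight (Function.update w s(x, y) c) M
        = treeWeight w M - w s(x, y) + c := tw_update_mem w c _ M he
    by_cases heT : s(x, y) ∈ T.edgeSet
    · have h1 := tw_update_mem w c s(x, y) T heT
      have h2 := hMmin T hT
      linarith
    · have h1 := tw_update_not_mem w c s(x, y) T heT
      have h2 := key T hT heT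
      linarith
  · intro hcf
    have hM'tree : (M.deleteEdges {s(x, y)} ⊔ fromEdgeSet {f}).IsTree := by
      rw [hfab]
      exact swap_isTree hMtree hadjxy haS hbS
    have hM'le : M.deleteEdges {s(x, y)} ⊔ fromEdgeSet {f} ≤ G := by
      refine sup_le ((deleteEdges_le _).trans hMG) ?_
      have h := fromEdgeSet_mono (Set.singleton_subset_iff.mpr hfG)
      rwa [fromEdgeSet_edgeSet] at h
    have hE : (M.deleteEdges {s(x, y)} ⊔ fromEdgeSet {f}).edgeSet
        = insert f (M.edgeSet \ {s(x, y)}) := edgeSet_swap hfd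
    have hM'w : treeWeight w (M.deleteEdges {s(x, y)} ⊔ fromEdgeSet {f})
        = treeWeight w M - w s(x, y) + w f := tw_exchange w M _ _ _ he hfM hE
    have heM' : s(x, y) ∉ (M.deleteEdges {s(x, y)} ⊔ fromEdgeSet {f}).edgeSet := by
      rw [hE, Set.mem_insert_iff]
      rintro (h | h)
      · exact hfe h.symm
      · exact h.2 rfl
    have hM'up := tw_update_not_mem w c s(x, y) _ heM'
    refine ⟨⟨hM'le, hM'tree⟩, ?_⟩
    intro T hT
    by_cases heT : s(x, y) ∈ T.edgeSet
    · have h1 := tw_update_mem w c s(x, y) T heT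
      have h2 := hMmin T hT
      linarith
    · have h1 := tw_update_not_mem w c s(x, y) T heT
      have h2 := key T hT heT
      linarith
end

section
/- Changing the weight of a single edge of a graph with distinct edge weights changes the minimum spanning tree by at most one edge swap: the symmetric difference of the old and new MST edge sets has cardinality 0 or 2. -/
open SimpleGraph

section Aux

set_option autoImplicit false

variable {V : Type*}


lemma reach_del_aux {K : SimpleGraph V} {u v : V} {a b : V} (p : K.Walk a b)
    (h : (K.deleteEdges {s(u,v)}).Reachable u a ∨ (K.deleteEdges {s(u,v)}).Reachable v a) :
    (K.deleteEdges {s(u,v)}).Reachable u b ∨ (K.deleteEdges {s(u,v)}).Reachable v b := by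
  induction p with
  | nil => exact h
  | @cons a c b hac q ih =>
    apply ih
    by_cases hec : s(a, c) = s(u, v)
    · rw [Sym2.eq_iff] at hec
      rcases hec with ⟨rfl, rfl⟩ | ⟨rfl, rfl⟩
      · exact Or.inr (Reachable.refl _)
      · exact Or.inl (Reachable.refl _)
    · have hadj : (K.deleteEdges {s(u,v)}).Adj a c := by
        rw [deleteEdges_adj]
        exact ⟨hac, by simpa using hec⟩
      exact h.imp (fun hr => hr.trans hadj.reachable) (fun hr => hr.trans hadj.reachable)

lemma reach_del {K : SimpleGraph V} (hK : K.Connected) (u v z : V) :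
    (K.deleteEdges {s(u,v)}).Reachable u z ∨ (K.deleteEdges {s(u,v)}).Reachable v z := by
  obtain ⟨p⟩ := hK.preconnected u z
  exact reach_del_aux p (Or.inl (Reachable.refl _))

lemma crossing_edge {K : SimpleGraph V} (S : Set V) {a b : V} (p : K.Walk a b)
    (ha : a ∈ S) (hb : b ∉ S) :
    ∃ x y : V, s(x,y) ∈ p.edges ∧ K.Adj x y ∧ x ∈ S ∧ y ∉ S := by
  induction p with
  | nil => exact absurd ha hb
  | @cons a c b hac q ih =>
    by_cases hc : c ∈ S
    · obtain ⟨x, y, hmem, h1, h2, h3⟩ := ih hc hb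
      exact ⟨x, y, List.mem_cons_of_mem _ hmem, h1, h2, h3⟩
    · exact ⟨a, c, List.mem_cons_self, hac, ha, hc⟩

lemma acyclic_sup_edge {K : SimpleGraph V} (hK : K.IsAcyclic) {x y : V}
    (hxy : ¬K.Reachable x y) :
    (K ⊔ fromEdgeSet {s(x,y)}).IsAcyclic := by
  intro a c hc
  by_cases he : s(x,y) ∈ c.edges
  · have hreach := (adj_and_reachable_delete_edges_iff_exists_cycle.mpr ⟨a, c, hc, he⟩).2
    apply hxy
    refine hreach.mono ?_
    intro p q hpq
    have := hpq.1
    rw [sup_adj, fromEdgeSet_adj] at this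
    rcases this with h | h
    · exact h
    · exfalso
      apply hpq.2
      rw [fromEdgeSet_adj]
      exact ⟨h.1, h.2⟩
  · have hsub : ∀ e ∈ c.edges, e ∈ K.edgeSet := by
      intro e hemem
      have := c.edges_subset_edgeSet hemem
      rw [edgeSet_sup, edgeSet_fromEdgeSet] at this
      rcases this with h | h
      · exact h
      · obtain ⟨h1, -⟩ := h
        rw [Set.mem_singleton_iff] at h1
        exact absurd (h1 ▸ hemem) he
    exact hK (c.transfer K hsub) (hc.transfer hsub)

lemma path_split_del {K : SimpleGraph V} {x y : V} :
    ∀ {u v : V} (p : K.Walk u v), p.IsPath → s(x,y) ∈ p.edges →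
    ((K.deleteEdges {s(x,y)}).Reachable u x ∧ (K.deleteEdges {s(x,y)}).Reachable y v) ∨
    ((K.deleteEdges {s(x,y)}).Reachable u y ∧ (K.deleteEdges {s(x,y)}).Reachable x v) := by
  intro u v p
  induction p with
  | nil => intro _ hf; simp at hf
  | @cons u c b huc q ih =>
    intro hp hf
    have hq : q.IsPath := hp.of_cons
    by_cases hfe : s(u, c) = s(x, y)
    · have hnotin : s(x,y) ∉ q.edges := by
        have := hp.isTrail.edges_nodup
        rw [Walk.edges_cons, List.nodup_cons] at this
        exact hfe ▸ this.1
      have hq' : (K.deleteEdges {s(x,y)}).Reachable c b :=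
        ⟨q.toDeleteEdges {s(x,y)} (fun e he => by
          rw [Set.mem_singleton_iff]; exact fun h => hnotin (h ▸ he))⟩
      rw [Sym2.eq_iff] at hfe
      rcases hfe with ⟨hx, hy⟩ | ⟨hx, hy⟩
      · exact Or.inl ⟨by rw [← hx], hy ▸ hq'⟩
      · exact Or.inr ⟨by rw [← hx], hy ▸ hq'⟩
    · have hfq : s(x,y) ∈ q.edges := by
        rw [Walk.edges_cons, List.mem_cons] at hf
        exact hf.resolve_left (fun h => hfe h.symm)
      have hadj : (K.deleteEdges {s(x,y)}).Adj u c := by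
        rw [deleteEdges_adj]
        exact ⟨huc, by simpa using hfe⟩
      rcases ih hq hfq with ⟨h1, h2⟩ | ⟨h1, h2⟩
      · exact Or.inl ⟨hadj.reachable.trans h1, h2⟩
      · exact Or.inr ⟨hadj.reachable.trans h1, h2⟩

lemma not_reach_del_of_bridge {K : SimpleGraph V} {x y u v : V}
    (hb : K.IsBridge s(x,y)) (p : K.Walk u v) (hp : p.IsPath) (hf : s(x,y) ∈ p.edges) :
    ¬(K.deleteEdges {s(x,y)}).Reachable u v := by
  intro hr
  have hbr : ¬(K.deleteEdges {s(x,y)}).Reachable x y := (isBridge_iff.mp hb)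
  rcases path_split_del p hp hf with ⟨h1, h2⟩ | ⟨h1, h2⟩
  · exact hbr ((h1.symm.trans hr).trans h2.symm)
  · exact hbr ((h2.trans hr.symm).trans h1)

lemma acyclic_mono {K L : SimpleGraph V} (h : K ≤ L) (hL : L.IsAcyclic) : K.IsAcyclic :=
  fun _a c hc => hL (c.transfer L (fun _e he => edgeSet_mono h (c.edges_subset_edgeSet he)))
    (hc.transfer _)

lemma fromEdgeSet_single_le {G : SimpleGraph V} {x y : V} (h : G.Adj x y) :
    fromEdgeSet {s(x,y)} ≤ G := by
  intro a b hab
  rw [fromEdgeSet_adj, Set.mem_singleton_iff, Sym2.eq_iff] at hab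
  rcases hab.1 with ⟨rfl, rfl⟩ | ⟨rfl, rfl⟩
  · exact h
  · exact h.symm

lemma exchange {G M M' : SimpleGraph V} (hM : IsSpanningTree G M) (hM' : IsSpanningTree G M')
    {u v : V} (he : M.Adj u v) (he' : s(u,v) ∉ M'.edgeSet) :
    ∃ f ∈ M'.edgeSet \ M.edgeSet,
      IsSpanningTree G (M.deleteEdges {s(u,v)} ⊔ fromEdgeSet {f}) ∧
      IsSpanningTree G (M'.deleteEdges {f} ⊔ fromEdgeSet {s(u,v)}) := by
  classical
  have hMle := hM.1
  have hMc := hM.2.isConnected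
  have hMa := hM.2.IsAcyclic
  have hM'le := hM'.1
  have hM'c := hM'.2.isConnected
  have hM'a := hM'.2.IsAcyclic
  set D := M.deleteEdges {s(u,v)} with hD
  have hbridge : M.IsBridge s(u,v) := isAcyclic_iff_forall_edge_isBridge.mp hMa ((mem_edgeSet M).mpr he)
  have hv : ¬D.Reachable u v := (isBridge_iff.mp hbridge)
  -- path in M' from u to v
  obtain ⟨p0⟩ := hM'c.preconnected u v
  let p : M'.Path u v := p0.toPath
  obtain ⟨x, y, hmem, hadj', hxS, hyS⟩ :=
    crossing_edge {z | D.Reachable u z} (p : M'.Walk u v) (Reachable.refl u) hv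
  have hxS : D.Reachable u x := hxS
  have hyS : ¬D.Reachable u y := hyS
  have hfM' : s(x,y) ∈ M'.edgeSet := (mem_edgeSet M').mpr hadj'
  have hfne : s(x,y) ≠ s(u,v) := fun h => he' (h ▸ hfM')
  have hfM : s(x,y) ∉ M.edgeSet := by
    intro h
    have : D.Adj x y := by
      rw [hD, deleteEdges_adj]
      exact ⟨h, by simpa using hfne⟩
    exact hyS (hxS.trans this.reachable)
  have hxy : ¬D.Reachable x y := fun h => hyS (hxS.trans h)
  have hM'bridge : M'.IsBridge s(x,y) := isAcyclic_iff_forall_edge_isBridge.mp hM'a hfM'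
  have hT2del : ¬(M'.deleteEdges {s(x,y)}).Reachable u v :=
    not_reach_del_of_bridge hM'bridge (p : M'.Walk u v) p.2 hmem
  set D' := M'.deleteEdges {s(x,y)} with hD'
  -- v reachable from y in D
  have hyv : D.Reachable v y := by
    rcases reach_del hMc u v y with h | h
    · exact absurd h hyS
    · exact h
  -- T1
  have hT1adj : (fromEdgeSet {s(x,y)} : SimpleGraph V).Adj x y := by
    rw [fromEdgeSet_adj]
    exact ⟨rfl, hadj'.ne⟩
  have hT1 : IsSpanningTree G (D ⊔ fromEdgeSet {s(x,y)}) := by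
    refine ⟨sup_le (le_trans (deleteEdges_le _) hMle) (fromEdgeSet_single_le (hM'le hadj')),
      ?_, acyclic_sup_edge (acyclic_mono (deleteEdges_le _) hMa) hxy⟩
    have huv : (D ⊔ fromEdgeSet {s(x,y)}).Reachable u v :=
      ((hxS.mono le_sup_left).trans (hT1adj.reachable.mono le_sup_right)).trans
        ((hyv.mono le_sup_left).symm)
    have : Nonempty V := ⟨u⟩
    constructor
    intro z z'
    have hz : ∀ t : V, (D ⊔ fromEdgeSet {s(x,y)}).Reachable u t := by
      intro t
      rcases reach_del hMc u v t with h | h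
      · exact h.mono le_sup_left
      · exact huv.trans (h.mono le_sup_left)
    exact (hz z).symm.trans (hz z')
  -- T2
  have hT2adj : (fromEdgeSet {s(u,v)} : SimpleGraph V).Adj u v := by
    rw [fromEdgeSet_adj]
    exact ⟨rfl, he.ne⟩
  have hT2 : IsSpanningTree G (D' ⊔ fromEdgeSet {s(u,v)}) := by
    refine ⟨sup_le (le_trans (deleteEdges_le _) hM'le) (fromEdgeSet_single_le (hMle he)),
      ?_, acyclic_sup_edge (acyclic_mono (deleteEdges_le _) hM'a) hT2del⟩
    have hu2 := reach_del hM'c x y u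
    have hv2 := reach_del hM'c x y v
    have hkey : (D'.Reachable x u ∧ D'.Reachable y v) ∨ (D'.Reachable x v ∧ D'.Reachable y u) := by
      rcases hu2 with h1 | h1 <;> rcases hv2 with h2 | h2
      · exact absurd (h1.symm.trans h2) hT2del
      · exact Or.inl ⟨h1, h2⟩
      · exact Or.inr ⟨h2, h1⟩
      · exact absurd (h1.symm.trans h2) hT2del
    have huv2 : (D' ⊔ fromEdgeSet {s(u,v)}).Reachable u v := (hT2adj.reachable.mono le_sup_right)
    have hz : ∀ t : V, (D' ⊔ fromEdgeSet {s(u,v)}).Reachable u t := by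
      intro t
      rcases reach_del hM'c x y t with h | h
      · rcases hkey with ⟨h1, _⟩ | ⟨h1, _⟩
        · exact ((h1.symm.trans h).mono le_sup_left)
        · exact huv2.trans ((h1.symm.trans h).mono le_sup_left)
      · rcases hkey with ⟨_, h1⟩ | ⟨_, h1⟩
        · exact huv2.trans ((h1.symm.trans h).mono le_sup_left)
        · exact ((h1.symm.trans h).mono le_sup_left)
    have : Nonempty V := ⟨u⟩
    constructor
    intro z z'
    exact (hz z).symm.trans (hz z')
  exact ⟨s(x,y), ⟨hfM', hfM⟩, hT1, hT2⟩

lemma treeWeight_swap [Fintype V] [DecidableEq V] (w : Sym2 V → ℝ) {M : SimpleGraph V}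
    {e f : Sym2 V} (he : e ∈ M.edgeSet) (hf : f ∉ M.edgeSet) (hfd : ¬f.IsDiag) :
    treeWeight w (M.deleteEdges {e} ⊔ fromEdgeSet {f}) = treeWeight w M - w e + w f := by
  have hes : (M.deleteEdges {e} ⊔ fromEdgeSet {f}).edgeSet = (M.edgeSet \ {e}) ∪ {f} := by
    rw [edgeSet_sup, edgeSet_deleteEdges, edgeSet_fromEdgeSet]
    have : ({f} : Set (Sym2 V)) \ {e | e.IsDiag} = {f} := by
      ext g
      simp only [Set.mem_diff, Set.mem_singleton_iff, Set.mem_setOf_eq]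
      constructor
      · rintro ⟨h, -⟩
        exact h
      · rintro rfl
        exact ⟨rfl, hfd⟩
    rw [show Sym2.diagSet = {e : Sym2 V | e.IsDiag} from rfl, this]
  have hdisj : Disjoint (M.edgeSet \ {e}) {f} := by
    rw [Set.disjoint_singleton_right]
    exact fun h => hf h.1
  have hdisj2 : Disjoint (M.edgeSet \ {e}) {e} := by
    rw [Set.disjoint_singleton_right]
    exact fun h => h.2 rfl
  have hM : treeWeight w M = (∑ᶠ g ∈ M.edgeSet \ {e}, w g) + w e := by
    unfold treeWeight
    conv_lhs => rw [← Set.diff_union_of_subset (Set.singleton_subset_iff.mpr he)]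
    rw [finsum_mem_union hdisj2 ((M.edgeSet.toFinite).diff) (Set.finite_singleton e),
      finsum_mem_singleton]
  unfold treeWeight
  rw [hes, finsum_mem_union hdisj ((M.edgeSet.toFinite).diff) (Set.finite_singleton f),
    finsum_mem_singleton]
  unfold treeWeight at hM
  linarith

lemma key [Fintype V] [DecidableEq V] {G M M' : SimpleGraph V} {w w' : Sym2 V → ℝ}
    (hw : Set.InjOn w G.edgeSet)
    (hM : IsMST G w M) (hM' : IsMST G w' M') {e : Sym2 V}
    (he : e ∈ M.edgeSet) (he' : e ∉ M'.edgeSet) :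
    ∃ f ∈ M'.edgeSet \ M.edgeSet, w e < w f ∧ w' f ≤ w' e := by
  induction e using Sym2.ind with
  | _ u v =>
  have headj : M.Adj u v := (mem_edgeSet M).mp he
  obtain ⟨f, hf, hT1, hT2⟩ := exchange hM.1 hM'.1 headj he'
  have hfd : ¬f.IsDiag := not_isDiag_of_mem_edgeSet _ hf.1
  have hed : ¬(s(u,v) : Sym2 V).IsDiag := not_isDiag_of_mem_edgeSet _ he
  have h1 : treeWeight w M ≤ treeWeight w M - w s(u,v) + w f := by
    have := hM.2 _ hT1
    rwa [treeWeight_swap w he hf.2 hfd] at this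
  have h2 : treeWeight w' M' ≤ treeWeight w' M' - w' f + w' s(u,v) := by
    have := hM'.2 _ hT2
    rwa [treeWeight_swap w' hf.1 he' hed] at this
  have hne : (s(u,v) : Sym2 V) ≠ f := fun h => he' (by rw [h]; exact hf.1)
  have hlt : w s(u,v) < w f := by
    have hle : w s(u,v) ≤ w f := by linarith
    rcases lt_or_eq_of_le hle with h | h
    · exact h
    · exact absurd (hw (edgeSet_mono hM.1.1 he) (edgeSet_mono hM'.1.1 hf.1) h) hne
  exact ⟨f, hf, hlt, by linarith⟩

lemma edgeSet_ncard_eq [Fintype V] [DecidableEq V] {G M M' : SimpleGraph V}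
    (hM : IsSpanningTree G M) (hM' : IsSpanningTree G M') :
    M.edgeSet.ncard = M'.edgeSet.ncard := by
  classical
  have h1 := hM.2.card_edgeFinset
  have h2 := hM'.2.card_edgeFinset
  rw [← coe_edgeFinset, ← coe_edgeFinset, Set.ncard_coe_finset, Set.ncard_coe_finset]
  omega

theorem mst_single_change_swap' {V : Type*} [Fintype V] [DecidableEq V]
    (G : SimpleGraph V) (hG : G.Connected)
    (w w' : Sym2 V → ℝ)
    (hw : Set.InjOn w G.edgeSet) (hw' : Set.InjOn w' G.edgeSet)
    (e₀ : Sym2 V) (hagree : ∀ e : Sym2 V, e ≠ e₀ → w e = w' e)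
    (M M' : SimpleGraph V) (hM : IsMST G w M) (hM' : IsMST G w' M') :
    (symmDiff M.edgeSet M'.edgeSet).ncard = 0 ∨
    (symmDiff M.edgeSet M'.edgeSet).ncard = 2 := by
  classical
  set A := M.edgeSet with hA
  set B := M'.edgeSet with hB
  have hcard : A.ncard = B.ncard := edgeSet_ncard_eq hM.1 hM'.1
  have hdiffeq : (A \ B).ncard = (B \ A).ncard :=
    (Set.ncard_eq_ncard_iff_ncard_diff_eq_ncard_diff (Set.toFinite A) (Set.toFinite B)).mp hcard
  have hle1 : (A \ B).ncard ≤ 1 := by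
    by_contra hgt
    push_neg at hgt
    obtain ⟨e1, he1, e2, he2, hne12⟩ := (Set.one_lt_ncard (Set.toFinite _)).mp hgt
    obtain ⟨e, hemem, hee0⟩ : ∃ e ∈ A \ B, e ≠ e₀ := by
      by_cases h : e1 = e₀
      · exact ⟨e2, he2, fun hh => hne12 (by rw [h, hh])⟩
      · exact ⟨e1, he1, h⟩
    obtain ⟨f, hfmem, hwlt, hw'le⟩ := key hw hM hM' hemem.1 hemem.2
    by_cases hf0 : f = e₀
    · have hgt' : 1 < (B \ A).ncard := hdiffeq ▸ hgt
      obtain ⟨g1, hg1, g2, hg2, hgne12⟩ := (Set.one_lt_ncard (Set.toFinite _)).mp hgt'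
      obtain ⟨g, hgmem, hge0⟩ : ∃ g ∈ B \ A, g ≠ e₀ := by
        by_cases h : g1 = e₀
        · exact ⟨g2, hg2, fun hh => hgne12 (by rw [h, hh])⟩
        · exact ⟨g1, hg1, h⟩
      obtain ⟨h, hhmem, hw'lt, hwle⟩ := key hw' hM' hM hgmem.1 hgmem.2
      have hhe0 : h ≠ e₀ := by
        intro hh
        exact (hf0 ▸ hfmem).2 ((hh ▸ hhmem).1)
      have h1 := hagree g hge0
      have h2 := hagree h hhe0
      linarith
    · have h1 := hagree e hee0
      have h2 := hagree f hf0
      linarith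
  have hsymm : (symmDiff A B).ncard = (A \ B).ncard + (B \ A).ncard := by
    rw [Set.symmDiff_def,
      Set.ncard_union_eq disjoint_sdiff_sdiff (Set.toFinite _) (Set.toFinite _)]
  interval_cases h : (A \ B).ncard
  · left
    rw [hsymm, ← hdiffeq]
  · right
    rw [hsymm, ← hdiffeq]

end Aux

/-- Changing the weight of a single edge changes the minimum spanning tree by at
most one swap: the symmetric difference of the old and new MST edge sets has
cardinality `0` or `2`. -/
theorem mst_single_change_swap {V : Type*} [Fintype V] [DecidableEq V]
    (G : SimpleGraph V) (hG : G.Connected)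
    (w w' : Sym2 V → ℝ)
    (hw : Set.InjOn w G.edgeSet) (hw' : Set.InjOn w' G.edgeSet)
    (e₀ : Sym2 V) (hagree : ∀ e : Sym2 V, e ≠ e₀ → w e = w' e)
    (M M' : SimpleGraph V) (hM : IsMST G w M) (hM' : IsMST G w' M') :
    (symmDiff M.edgeSet M'.edgeSet).ncard = 0 ∨
    (symmDiff M.edgeSet M'.edgeSet).ncard = 2 := by
  exact mst_single_change_swap' G hG w w' hw hw' e₀ hagree M M' hM hM'
end

section
/- Generic greedy MST correctness: let F be a forest contained in the minimum spanning tree M of a connected graph G with distinct edge weights, and let e be the minimum-weight edge of G leaving some connected component T of F (exactly one endpoint in T). Then F ∪ {e} is also contained in M. -/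
open SimpleGraph

private lemma aux_split {V : Type*} {M : SimpleGraph V} (a b : V) {x y : V} (q : M.Walk x y) :
    (M.deleteEdges {s(a, b)}).Reachable x y ∨
      ((M.deleteEdges {s(a, b)}).Reachable x a ∧ (M.deleteEdges {s(a, b)}).Reachable y b) ∨
      ((M.deleteEdges {s(a, b)}).Reachable x b ∧ (M.deleteEdges {s(a, b)}).Reachable y a) := by
  induction q with
  | nil => exact Or.inl (Reachable.refl _)
  | @cons x z y hadj q ih =>
    by_cases hxz : s(x, z) = s(a, b)
    · rw [Sym2.eq_iff] at hxz
      rcases hxz with ⟨rfl, rfl⟩ | ⟨rfl, rfl⟩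
      · rcases ih with h | ⟨h1, h2⟩ | ⟨h1, h2⟩
        · exact Or.inr (Or.inl ⟨Reachable.refl _, h.symm⟩)
        · exact Or.inr (Or.inl ⟨Reachable.refl _, h2⟩)
        · exact Or.inl h2.symm
      · rcases ih with h | ⟨h1, h2⟩ | ⟨h1, h2⟩
        · exact Or.inr (Or.inr ⟨Reachable.refl _, h.symm⟩)
        · exact Or.inl h2.symm
        · exact Or.inr (Or.inr ⟨Reachable.refl _, h2⟩)
    · have hadj' : (M.deleteEdges {s(a, b)}).Adj x z := by
        rw [deleteEdges_adj]
        exact ⟨hadj, by simpa using hxz⟩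
      rcases ih with h | ⟨h1, h2⟩ | ⟨h1, h2⟩
      · exact Or.inl (hadj'.reachable.trans h)
      · exact Or.inr (Or.inl ⟨hadj'.reachable.trans h1, h2⟩)
      · exact Or.inr (Or.inr ⟨hadj'.reachable.trans h1, h2⟩)

private lemma aux_lift {V : Type*} {M T' : SimpleGraph V} {a b : V}
    (hab : T'.Reachable a b)
    (hedge : ∀ {x z : V}, M.Adj x z → s(x, z) ≠ s(a, b) → T'.Adj x z) :
    ∀ {x y : V}, M.Walk x y → T'.Reachable x y := by
  intro x y q
  induction q with
  | nil => exact Reachable.refl _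
  | @cons x z _ hadj q ih =>
    by_cases hxz : s(x, z) = s(a, b)
    · rw [Sym2.eq_iff] at hxz
      rcases hxz with ⟨rfl, rfl⟩ | ⟨rfl, rfl⟩
      · exact hab.trans ih
      · exact hab.symm.trans ih
    · exact (hedge hadj hxz).reachable.trans ih

/-- **Generic greedy MST correctness.** Let `F` be a set of edges of the minimum
spanning tree `M` forming a forest, let `S` be the vertex set of the connected
component of the forest containing a vertex `t`, and let `e` be the minimum-weight
edge of `G` with exactly one endpoint in `S`. Then `e ∈ M`, hence `F ∪ {e}` is
still contained in `M`. -/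
theorem greedy_step_in_mst {V : Type*} [Fintype V] [DecidableEq V]
    (G : SimpleGraph V) (hG : G.Connected)
    (w : Sym2 V → ℝ) (hw : Set.InjOn w G.edgeSet)
    (M : SimpleGraph V) (hM : IsMST G w M)
    (F : Set (Sym2 V)) (hFM : F ⊆ M.edgeSet)
    (hforest : (SimpleGraph.fromEdgeSet F).IsAcyclic)
    (t : V) (S : Set V) (hS : S = {z : V | (SimpleGraph.fromEdgeSet F).Reachable t z})
    (e : Sym2 V) (he : e ∈ G.edgeSet) (hcross : Crosses S e)
    (hmin : ∀ f ∈ G.edgeSet, Crosses S f → w e ≤ w f) :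
    e ∈ M.edgeSet ∧ insert e F ⊆ M.edgeSet := by
  classical
  obtain ⟨⟨hMG, hMtree⟩, hMmin⟩ := hM
  have hMconn : M.Connected := hMtree.isConnected
  have hMacyc : M.IsAcyclic := hMtree.IsAcyclic
  obtain ⟨u, v, heuv, huS, hvS⟩ := hcross
  have huv : u ≠ v := fun h => hvS (h ▸ huS)
  suffices heM : e ∈ M.edgeSet from ⟨heM, Set.insert_subset heM hFM⟩
  by_contra heM
  -- a path from u to v in M
  obtain ⟨p, hp⟩ : ∃ p : M.Walk u v, p.IsPath :=
    (hMconn.preconnected u v).elim_path fun q => ⟨q, q.2⟩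
  -- a boundary dart of the path
  obtain ⟨d, hd, haS, hbS⟩ := p.exists_boundary_dart S huS hvS
  set a := d.fst with ha
  set b := d.snd with hb
  have hfM : s(a, b) ∈ M.edgeSet := d.adj
  have hfp : s(a, b) ∈ p.edges := by
    have : d.edge ∈ p.edges := List.mem_map_of_mem (f := Dart.edge) hd
    simpa [Dart.edge] using this
  have hfG : s(a, b) ∈ G.edgeSet := edgeSet_mono hMG hfM
  have hef : e ≠ s(a, b) := fun h => heM (h ▸ hfM)
  have hwef : w e < w s(a, b) :=
    lt_of_le_of_ne (hmin _ hfG ⟨a, b, rfl, haS, hbS⟩) fun h => hef (hw he hfG h)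
  set M' := M.deleteEdges {s(a, b)} with hM'
  have hM'le : M' ≤ M := deleteEdges_le _
  -- u and v are not reachable in M minus the edge s(a,b)
  have hnotreach : ¬ M'.Reachable u v := by
    rintro ⟨q⟩
    have hq' : ∀ g ∈ q.toPath.1.edges, g ∈ M.edgeSet := fun g hg =>
      edgeSet_mono hM'le (Walk.edges_subset_edgeSet _ hg)
    have hnab : s(a, b) ∉ q.toPath.1.edges := by
      intro hmem
      have := Walk.edges_subset_edgeSet _ hmem
      rw [hM', edgeSet_deleteEdges] at this
      exact this.2 rfl
    have hEq : (⟨p, hp⟩ : M.Path u v) = ⟨q.toPath.1.transfer M hq', q.toPath.2.transfer hq'⟩ :=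
      hMacyc.path_unique _ _
    have hpe : p = q.toPath.1.transfer M hq' := Subtype.ext_iff.mp hEq
    rw [hpe, Walk.edges_transfer] at hfp
    exact hnab hfp
  -- every vertex reaches a or b in M'
  have hsplit : ∀ x : V, M'.Reachable x a ∨ M'.Reachable x b := by
    intro x
    obtain ⟨q⟩ := hMconn.preconnected x a
    rcases aux_split a b q with h | ⟨h1, -⟩ | ⟨h1, -⟩
    · exact Or.inl h
    · exact Or.inl h1
    · exact Or.inr h1
  -- the swapped graph
  set T' := SimpleGraph.fromEdgeSet (insert e (M.edgeSet \ {s(a, b)})) with hT'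
  have hT'edge : T'.edgeSet = insert e (M.edgeSet \ {s(a, b)}) := by
    have hnd : Disjoint (insert e (M.edgeSet \ {s(a, b)})) {g : Sym2 V | g.IsDiag} := by
      rw [Set.disjoint_left]
      rintro g (rfl | ⟨hg, -⟩) hdiag
      · rw [Set.mem_setOf_eq, heuv, Sym2.mk_isDiag_iff] at hdiag
        exact huv hdiag
      · exact M.not_isDiag_of_mem_edgeSet hg hdiag
    rw [hT', edgeSet_fromEdgeSet]
    exact sdiff_eq_left.mpr hnd
  have hM'T' : M' ≤ T' := by
    rw [← edgeSet_subset_edgeSet, hT'edge, hM', edgeSet_deleteEdges]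
    exact Set.subset_insert _ _
  have hT'uv : T'.Adj u v := by
    rw [← mem_edgeSet, ← heuv, hT'edge]
    exact Set.mem_insert _ _
  -- a and b are connected in T'
  have hab : T'.Reachable a b := by
    rcases hsplit u with hu | hu <;> rcases hsplit v with hv | hv
    · exact absurd (hu.trans hv.symm) hnotreach
    · exact ((hu.mono hM'T').symm.trans hT'uv.reachable).trans (hv.mono hM'T')
    · exact ((hv.mono hM'T').symm.trans hT'uv.symm.reachable).trans (hu.mono hM'T')
    · exact absurd (hu.trans hv.symm) hnotreach
  -- T' is connected
  have hlift : ∀ {x y : V}, M.Walk x y → T'.Reachable x y := by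
    refine aux_lift hab fun {x z} hadj hxz => ?_
    rw [hT', fromEdgeSet_adj]
    exact ⟨Set.mem_insert_of_mem _ ⟨hadj, by simpa using hxz⟩, hadj.ne⟩
  have hT'conn : T'.Connected := by
    rw [connected_iff]
    refine ⟨fun x y => ?_, hMconn.nonempty⟩
    obtain ⟨q⟩ := hMconn.preconnected x y
    exact hlift q
  -- T' is acyclic
  have hT'acyc : T'.IsAcyclic := by
    intro x c hc
    by_cases hec : e ∈ c.edges
    · have hreach : (T' \ fromEdgeSet {s(u, v)}).Reachable u v :=
        ((adj_and_reachable_delete_edges_iff_exists_cycle (G := T')).mpr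
          ⟨x, c, hc, heuv ▸ hec⟩).2
      have hle : T' \ fromEdgeSet {s(u, v)} ≤ M' := by
        rw [← edgeSet_subset_edgeSet, edgeSet_sdiff, hT'edge, hM', edgeSet_deleteEdges]
        rintro g ⟨hg1, hg2⟩
        have hgne : g ≠ e := by
          intro h
          apply hg2
          rw [edgeSet_fromEdgeSet]
          exact ⟨by rw [h, heuv]; exact rfl, by
            rw [h, heuv, Sym2.mem_diagSet, Sym2.mk_isDiag_iff]; exact huv⟩
        rcases hg1 with rfl | hg
        · exact absurd rfl hgne
        · exact hg
      exact hnotreach (hreach.mono hle)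
    · have hsub : ∀ g ∈ c.edges, g ∈ M.edgeSet := by
        intro g hg
        have := Walk.edges_subset_edgeSet _ hg
        rw [hT'edge] at this
        rcases this with rfl | hg'
        · exact absurd hg hec
        · exact hg'.1
      exact hMacyc (c.transfer M hsub) (hc.transfer hsub)
  -- T' is a spanning tree of G
  have hT'G : T' ≤ G := by
    rw [← edgeSet_subset_edgeSet, hT'edge]
    rintro g (rfl | ⟨hg, -⟩)
    · exact he
    · exact edgeSet_mono hMG hg
  have hmle := hMmin T' ⟨hT'G, hT'conn, hT'acyc⟩
  -- weight computation
  have hAfin : (M.edgeSet).Finite := Set.toFinite _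
  have hBfin : (M.edgeSet \ {s(a, b)}).Finite := hAfin.diff
  have hCfin : (insert e (M.edgeSet \ {s(a, b)})).Finite := hBfin.insert e
  have hwT' : treeWeight w T' = w e + ∑ g ∈ hBfin.toFinset, w g := by
    rw [treeWeight, hT'edge, finsum_mem_eq_finite_toFinset_sum _ hCfin]
    rw [Set.Finite.toFinset_insert]
    rw [Finset.sum_insert (by
      simp only [Set.Finite.mem_toFinset, Set.mem_diff]
      exact fun h => heM h.1)]
  have hwM : treeWeight w M = w s(a, b) + ∑ g ∈ hBfin.toFinset, w g := by
    rw [treeWeight, finsum_mem_eq_finite_toFinset_sum _ hAfin]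
    have : hAfin.toFinset = insert (s(a, b)) hBfin.toFinset := by
      ext g
      simp only [Set.Finite.mem_toFinset, Finset.mem_insert, Set.mem_diff,
        Set.mem_singleton_iff]
      constructor
      · intro hg
        by_cases hgf : g = s(a, b)
        · exact Or.inl hgf
        · exact Or.inr ⟨hg, hgf⟩
      · rintro (rfl | ⟨hg, -⟩)
        · exact hfM
        · exact hg
    rw [this, Finset.sum_insert (by
      simp only [Set.Finite.mem_toFinset]
      exact fun h => h.2 (Set.mem_singleton _))]
  rw [hwT', hwM] at hmle
  linarith
end
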